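/- arXiv:2410.09716 — 2 statements merged into one kernel-verified Lean document; each statement's English description precedes it below -/
import Mathlib

section
/- Every measurable set E ⊆ ℝ of positive Lebesgue measure contains a three-point quadratic configuration: there exist x, t ∈ ℝ with t ≠ 0 such that x ∈ E, x + t ∈ E, and x + t² ∈ E. -/
/-! Take a Lebesgue density point `x₀` of `E` and a radius `r < 1` at which `closedBall x₀ r \ E`
has less than a sixth of the measure of the ball. With `t = r / 2`, the shifts `0, t, t²` all lie
in `[0, r / 2]`, so every `x` within `r / 2` of `x₀` has `x, x + t, x + t²` in the ball. If the
pattern `{x, x + t, x + t²}` never fit in `E`, the ball of radius `r / 2` would be covered by three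
translates of `closedBall x₀ r \ E`, whose total measure is less than `r`. -/

open MeasureTheory Metric Filter ENNReal Topology

theorem Besicovitch.ae_tendsto_measure_closedBall_diff_div {β : Type*} [MetricSpace β]
    [MeasurableSpace β] [BorelSpace β] [SecondCountableTopology β] [HasBesicovitchCovering β]
    (μ : Measure β) [IsLocallyFiniteMeasure μ] {s : Set β} (hs : MeasurableSet s) :
    ∀ᵐ x ∂μ.restrict s,
      Tendsto (fun r => μ (closedBall x r \ s) / μ (closedBall x r)) (𝓝[>] 0) (𝓝 0) := by
  filter_upwards [ae_restrict_mem hs,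
    ae_restrict_of_ae (ae_tendsto_measure_inter_div_of_measurableSet μ hs.compl)] with x hx h
  simpa [Set.sdiff_eq, Set.inter_comm, hx] using h

theorem Besicovitch.exists_eventually_mul_measure_closedBall_diff_lt {β : Type*} [MetricSpace β]
    [ProperSpace β] [MeasurableSpace β] [BorelSpace β] [SecondCountableTopology β]
    [HasBesicovitchCovering β] (μ : Measure β) [IsLocallyFiniteMeasure μ] [μ.IsOpenPosMeasure]
    {s : Set β} (hs : MeasurableSet s) (hμs : μ s ≠ 0) {c : ℝ≥0∞} (hc : c ≠ ∞) :
    ∃ x, ∀ᶠ r in 𝓝[>] 0, c * μ (closedBall x r \ s) < μ (closedBall x r) := by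
  obtain ⟨x, -, hx⟩ := Measure.exists_mem_of_measure_ne_zero_of_ae hμs
    (ae_tendsto_measure_closedBall_diff_div μ hs)
  have hlim := ENNReal.Tendsto.const_mul hx (.inr hc)
  rw [mul_zero] at hlim
  refine ⟨x, ((hlim.eventually (gt_mem_nhds one_pos)).and self_mem_nhdsWithin).mono ?_⟩
  rintro r ⟨hr, hr₀⟩
  rwa [← mul_div_assoc, ENNReal.div_lt_iff (.inl (measure_closedBall_pos μ x hr₀).ne')
    (.inl measure_closedBall_lt_top.ne), one_mul] at hr

theorem exists_forall_add_mem_of_card_mul_measure_diff_lt {G : Type*} [MeasurableSpace G]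
    [AddGroup G] [MeasurableAdd G] (μ : Measure G) [μ.IsAddRightInvariant] {E I K : Set G}
    {s : Finset G} (hIK : ∀ x ∈ I, ∀ c ∈ s, x + c ∈ K) (hμ : s.card * μ (K \ E) < μ I) :
    ∃ x ∈ I, ∀ c ∈ s, x + c ∈ E := by
  by_contra! h
  have hcover : I ⊆ ⋃ c ∈ s, (· + c) ⁻¹' (K \ E) := by
    intro x hx
    obtain ⟨c, hc, hxc⟩ := h x hx
    exact Set.mem_biUnion hc ⟨hIK x hx c hc, hxc⟩
  refine (hμ.trans_le ?_).false
  calc μ I ≤ ∑ c ∈ s, μ ((· + c) ⁻¹' (K \ E)) :=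
        (measure_mono hcover).trans (measure_biUnion_finset_le s _)
    _ = s.card * μ (K \ E) := by
      simp only [measure_preimage_add_right, Finset.sum_const, nsmul_eq_mul]

theorem Real.exists_forall_add_mem_of_measure_closedBall_diff_lt {E : Set ℝ} {x₀ r : ℝ}
    {s : Finset ℝ} (hs : ∀ c ∈ s, |c| ≤ r / 2)
    (hμ : 2 * s.card * volume (closedBall x₀ r \ E) < volume (closedBall x₀ r)) :
    ∃ x, ∀ c ∈ s, x + c ∈ E := by
  have hIK : ∀ x ∈ closedBall x₀ (r / 2), ∀ c ∈ s, x + c ∈ closedBall x₀ r := by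
    intro x hx c hc
    rw [mem_closedBall] at hx ⊢
    calc dist (x + c) x₀ ≤ dist (x + c) x + dist x x₀ := dist_triangle _ _ _
      _ = |c| + dist x x₀ := by rw [Real.dist_eq, add_sub_cancel_left]
      _ ≤ r := by linarith [hs c hc]
  have hball : volume (closedBall x₀ r) = 2 * volume (closedBall x₀ (r / 2)) := by
    rw [Real.volume_closedBall, Real.volume_closedBall, ← ENNReal.ofReal_ofNat 2,
      ← ENNReal.ofReal_mul zero_le_two]
    ring_nf
  rw [hball, mul_assoc, (ENNReal.mul_right_strictMono two_ne_zero ofNat_ne_top).lt_iff_lt] at hμ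
  obtain ⟨x, -, hx⟩ := exists_forall_add_mem_of_card_mul_measure_diff_lt volume hIK hμ
  exact ⟨x, hx⟩

theorem stmt1 (E : Set ℝ) (hE : MeasurableSet E) (hEpos : 0 < volume E) :
    ∃ x t : ℝ, t ≠ 0 ∧ x ∈ E ∧ x + t ∈ E ∧ x + t ^ 2 ∈ E := by
  obtain ⟨x₀, hx₀⟩ := Besicovitch.exists_eventually_mul_measure_closedBall_diff_lt volume hE
    hEpos.ne' (c := 6) ofNat_ne_top
  obtain ⟨r, hdens, hr₀, hr₁⟩ := (hx₀.and (Ioo_mem_nhdsGT one_pos)).exists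
  set t := r / 2 with ht
  have ht₀ : 0 < t := by positivity
  have ht_sq : t ^ 2 ≤ t := by nlinarith
  have hshifts : ∀ c ∈ ({0, t, t ^ 2} : Finset ℝ), |c| ≤ t := by
    simp only [Finset.mem_insert, Finset.mem_singleton, forall_eq_or_imp, forall_eq, abs_zero,
      abs_of_pos ht₀, abs_sq]
    exact ⟨ht₀.le, le_rfl, ht_sq⟩
  have hcard : 2 * (({0, t, t ^ 2} : Finset ℝ).card : ℝ≥0∞) ≤ 6 := by
    have := Finset.card_le_three (a := 0) (b := t) (c := t ^ 2)
    norm_cast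
    omega
  obtain ⟨x, hx⟩ := Real.exists_forall_add_mem_of_measure_closedBall_diff_lt hshifts
    ((mul_le_mul_left hcard _).trans_lt hdens)
  simp only [Finset.mem_insert, Finset.mem_singleton, forall_eq_or_imp, forall_eq, add_zero] at hx
  exact ⟨x, t, ht₀.ne', hx⟩
end

section
/- Let μ be a probability measure on ℝ satisfying the spectral gap condition ∫_{A^{1/5} ≤ |ξ| ≤ B²} |μ̂(ξ)| dξ ≤ A^{-3} with 1 ≤ A ≤ B, and let φ be a Schwartz mollifier with ∫φ = 1 and φ̂'(0) = 0. Then for A sufficiently large, ∫_ℝ |μ̂(ξ)| · |φ̂(B^{-1}ξ) − φ̂(A^{-1}ξ)| dξ ≤ C·A^{-7/5} for a constant C depending only on φ. -/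
open MeasureTheory Set ENNReal

noncomputable def measureFT (μ : MeasureTheory.Measure ℝ) (ξ : ℝ) : ℂ :=
  ∫ x, Complex.exp (-2 * Real.pi * x * ξ * Complex.I) ∂μ

/-!
Split the frequency line at `|ξ| = A ^ (1/5)` and `|ξ| = B ^ 2`, and bound `|μ̂| ≤ 1` where the
spectral gap is not used. Since `φ̂'(0) = 0`, Taylor's theorem gives `|φ̂ η - φ̂ 0| ≲ η ^ 2`, so
on `|ξ| ≤ A ^ (1/5)` the difference `φ̂(ξ/B) - φ̂(ξ/A)` is `≲ ξ ^ 2 / A ^ 2`, which integrates to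
`≲ A ^ (3/5 - 2) = A ^ (-7/5)`. In the middle range the difference is bounded and the gap
hypothesis contributes `A ^ (-3)`. Beyond `B ^ 2` the decay `|φ̂ η| ≲ |η| ^ (-5)` bounds the
difference by `B ^ 5 |ξ| ^ (-5)`, whose tail integral is `≲ B ^ 5 (B ^ 2) ^ (-4) ≤ A ^ (-3)`.
-/

open scoped FourierTransform SchwartzMap

theorem norm_measureFT_le_one (μ : Measure ℝ) [IsProbabilityMeasure μ] (ξ : ℝ) :
    ‖measureFT μ ξ‖ ≤ 1 := by
  refine (norm_integral_le_of_norm_le_const (C := 1) (ae_of_all _ fun x => ?_)).trans (by simp)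
  simp [Complex.norm_exp]

section Taylor

variable {E : Type*} [NormedAddCommGroup E] [NormedSpace ℝ E]

theorem norm_sub_le_mul_sq_of_deriv_eq_zero {f : ℝ → E} {a M : ℝ} (hf : ContDiff ℝ 2 f)
    (ha : deriv f a = 0) (hM : ∀ x, ‖iteratedDeriv 2 f x‖ ≤ M) (x : ℝ) :
    ‖f x - f a‖ ≤ M * (x - a) ^ 2 := by
  have hM₀ : 0 ≤ M := (norm_nonneg _).trans (hM a)
  have hf' : Differentiable ℝ (deriv f) :=
    ((contDiff_succ_iff_deriv.mp hf).2.2).differentiable one_ne_zero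
  have hderiv_le : ∀ t, ‖deriv f t‖ ≤ M * |t - a| := fun t => by
    simpa [ha, Real.norm_eq_abs] using convex_univ.norm_image_sub_le_of_norm_deriv_le
      (fun y _ => hf'.differentiableAt) (fun y _ => by simpa [iteratedDeriv_succ'] using hM y)
      (mem_univ a) (mem_univ t)
  have hderiv_le' : ∀ y ∈ uIcc a x, ‖deriv f y‖ ≤ M * |x - a| := fun y hy =>
    (hderiv_le y).trans (mul_le_mul_of_nonneg_left (abs_sub_left_of_mem_uIcc hy) hM₀)
  calc ‖f x - f a‖ ≤ M * |x - a| * ‖x - a‖ :=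
        (convex_uIcc a x).norm_image_sub_le_of_norm_deriv_le
          (fun y _ => (hf.differentiable two_ne_zero).differentiableAt) hderiv_le'
          left_mem_uIcc right_mem_uIcc
    _ = M * (x - a) ^ 2 := by rw [Real.norm_eq_abs, mul_assoc, abs_mul_abs_self, sq]

end Taylor

theorem setLIntegral_abs_le_ofReal_sq {R : ℝ} (hR : 0 ≤ R) :
    ∫⁻ ξ in {ξ : ℝ | |ξ| ≤ R}, ENNReal.ofReal (ξ ^ 2) = ENNReal.ofReal (2 * R ^ 3 / 3) := by
  have hset : {ξ : ℝ | |ξ| ≤ R} = Icc (-R) R := by ext; simp [abs_le]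
  rw [hset, ← ofReal_integral_eq_lintegral_ofReal (continuous_pow 2).integrableOn_Icc
    (ae_of_all _ fun ξ => sq_nonneg ξ), integral_Icc_eq_integral_Ioc,
    ← intervalIntegral.integral_of_le (by linarith), integral_pow]
  ring_nf

theorem setLIntegral_Ici_ofReal_rpow_neg {p R : ℝ} (hp : 1 < p) (hR : 0 < R) :
    ∫⁻ ξ in Ici R, ENNReal.ofReal (ξ ^ (-p)) = ENNReal.ofReal (R ^ (1 - p) / (p - 1)) := by
  rw [← Measure.restrict_congr_set Ioi_ae_eq_Ici, ← ofReal_integral_eq_lintegral_ofReal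
    (integrableOn_Ioi_rpow_of_lt (by linarith) hR) ((ae_restrict_iff' measurableSet_Ioi).2
      (ae_of_all _ fun ξ hξ => Real.rpow_nonneg (hR.trans hξ).le _)),
    integral_Ioi_rpow_of_lt (by linarith) hR]
  congr 1
  rw [show -p + 1 = 1 - p by ring, neg_div, ← div_neg, neg_sub]

theorem setLIntegral_le_abs_ofReal_rpow_neg_le {p R : ℝ} (hp : 1 < p) (hR : 0 < R) :
    ∫⁻ ξ in {ξ : ℝ | R ≤ |ξ|}, ENNReal.ofReal (|ξ| ^ (-p)) ≤
      ENNReal.ofReal (2 * R ^ (1 - p) / (p - 1)) := by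
  have hcover : {ξ : ℝ | R ≤ |ξ|} ⊆ Neg.neg ⁻¹' Ici R ∪ Ici R := fun ξ hξ => by
    rcases le_total ξ 0 with h | h
    · left; simpa [abs_of_nonpos h, le_neg] using hξ
    · right; simpa [abs_of_nonneg h] using hξ
  have hIci : ∫⁻ ξ in Ici R, ENNReal.ofReal (|ξ| ^ (-p)) =
      ENNReal.ofReal (R ^ (1 - p) / (p - 1)) := by
    rw [← setLIntegral_Ici_ofReal_rpow_neg hp hR]
    exact setLIntegral_congr_fun measurableSet_Ici fun ξ hξ => by
      rw [abs_of_nonneg (hR.le.trans hξ)]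
  have hneg : ∫⁻ ξ in Neg.neg ⁻¹' Ici R, ENNReal.ofReal (|ξ| ^ (-p)) =
      ∫⁻ ξ in Ici R, ENNReal.ofReal (|ξ| ^ (-p)) := by
    simpa only [abs_neg] using (Measure.measurePreserving_neg volume).setLIntegral_comp_preimage_emb
      (MeasurableEquiv.neg ℝ).measurableEmbedding (fun ξ => ENNReal.ofReal (|ξ| ^ (-p))) (Ici R)
  calc ∫⁻ ξ in {ξ : ℝ | R ≤ |ξ|}, ENNReal.ofReal (|ξ| ^ (-p))
      ≤ ∫⁻ ξ in Neg.neg ⁻¹' Ici R ∪ Ici R, ENNReal.ofReal (|ξ| ^ (-p)) := lintegral_mono_set hcover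
    _ ≤ _ := lintegral_union_le _ _ _
    _ = ENNReal.ofReal (2 * R ^ (1 - p) / (p - 1)) := by
      have : 0 ≤ R ^ (1 - p) / (p - 1) := div_nonneg (by positivity) (by linarith)
      rw [hneg, hIci, ← ENNReal.ofReal_add this this]
      ring_nf

theorem lintegral_le_setLIntegral_abs_le_add (f : ℝ → ℝ≥0∞) (R T : ℝ) :
    ∫⁻ ξ, f ξ ≤ (∫⁻ ξ in {ξ : ℝ | |ξ| ≤ R}, f ξ) +
      ((∫⁻ ξ in {ξ : ℝ | R ≤ |ξ| ∧ |ξ| ≤ T}, f ξ) + ∫⁻ ξ in {ξ : ℝ | T ≤ |ξ|}, f ξ) := by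
  have hcover : univ ⊆ {ξ : ℝ | |ξ| ≤ R} ∪
      ({ξ : ℝ | R ≤ |ξ| ∧ |ξ| ≤ T} ∪ {ξ : ℝ | T ≤ |ξ|}) := fun ξ _ => by
    rcases le_total |ξ| R with h | h
    · exact Or.inl h
    rcases le_total |ξ| T with h' | h'
    · exact Or.inr (Or.inl ⟨h, h'⟩)
    · exact Or.inr (Or.inr h')
  rw [← setLIntegral_univ]
  exact (lintegral_mono_set hcover).trans ((lintegral_union_le _ _ _).trans
    (add_le_add_right (lintegral_union_le _ _ _) _))

section Dilation

variable {E F : Type*} [NormedAddCommGroup E] [NormedAddCommGroup F] {g : ℝ → F} {ψ : ℝ → E}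
  {A B : ℝ}

theorem norm_comp_inv_mul_sub_comp_inv_mul_le {M : ℝ} (hψ : ∀ x, ‖ψ x - ψ 0‖ ≤ M * x ^ 2)
    (hA : 0 < A) (hAB : A ≤ B) (ξ : ℝ) :
    ‖ψ (B⁻¹ * ξ) - ψ (A⁻¹ * ξ)‖ ≤ 2 * M / A ^ 2 * ξ ^ 2 := by
  have hM : 0 ≤ M := by simpa using (norm_nonneg _).trans (hψ 1)
  have hBA : (B⁻¹ * ξ) ^ 2 ≤ (A⁻¹ * ξ) ^ 2 := by
    have : 0 < B := hA.trans_le hAB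
    rw [mul_pow, mul_pow]
    gcongr
  calc ‖ψ (B⁻¹ * ξ) - ψ (A⁻¹ * ξ)‖ ≤ ‖ψ (B⁻¹ * ξ) - ψ 0‖ + ‖ψ (A⁻¹ * ξ) - ψ 0‖ :=
        by simpa only [dist_eq_norm] using dist_triangle_right _ _ (ψ 0)
    _ ≤ M * (A⁻¹ * ξ) ^ 2 + M * (A⁻¹ * ξ) ^ 2 :=
        add_le_add ((hψ _).trans (by gcongr)) (hψ _)
    _ = 2 * M / A ^ 2 * ξ ^ 2 := by field_simp; ring

theorem norm_comp_inv_mul_le {k : ℕ} {D t ξ : ℝ} (hψ : ∀ x, |x| ^ k * ‖ψ x‖ ≤ D) (ht : 0 < t)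
    (hξ : ξ ≠ 0) : ‖ψ (t⁻¹ * ξ)‖ ≤ D * t ^ k / |ξ| ^ k := by
  rw [le_div_iff₀ (by positivity)]
  calc ‖ψ (t⁻¹ * ξ)‖ * |ξ| ^ k = t ^ k * (|t⁻¹ * ξ| ^ k * ‖ψ (t⁻¹ * ξ)‖) := by
        rw [abs_mul, abs_inv, abs_of_pos ht, mul_pow, inv_pow]
        field_simp
    _ ≤ D * t ^ k := by rw [mul_comm D]; gcongr; exact hψ _

theorem enorm_mul_enorm_le_ofReal {a : F} {b : E} {c : ℝ} (ha : ‖a‖ ≤ 1) (hb : ‖b‖ ≤ c) :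
    ‖a‖ₑ * ‖b‖ₑ ≤ ENNReal.ofReal c :=
  calc ‖a‖ₑ * ‖b‖ₑ ≤ 1 * ‖b‖ₑ := by gcongr; rw [← ofReal_norm]; exact ofReal_le_one.mpr ha
    _ ≤ ENNReal.ofReal c := by rw [one_mul, ← ofReal_norm]; exact ofReal_le_ofReal hb

theorem setLIntegral_abs_le_enorm_mul_dilation_sub_le (hg : ∀ ξ, ‖g ξ‖ ≤ 1) {M R : ℝ}
    (hψ : ∀ x, ‖ψ x - ψ 0‖ ≤ M * x ^ 2) (hA : 0 < A) (hAB : A ≤ B) (hR : 0 ≤ R) :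
    ∫⁻ ξ in {ξ : ℝ | |ξ| ≤ R}, ‖g ξ‖ₑ * ‖ψ (B⁻¹ * ξ) - ψ (A⁻¹ * ξ)‖ₑ ≤
      ENNReal.ofReal (4 * M / 3 * R ^ 3 / A ^ 2) := by
  have hM : 0 ≤ M := by simpa using (norm_nonneg _).trans (hψ 1)
  calc ∫⁻ ξ in {ξ : ℝ | |ξ| ≤ R}, ‖g ξ‖ₑ * ‖ψ (B⁻¹ * ξ) - ψ (A⁻¹ * ξ)‖ₑ
      ≤ ∫⁻ ξ in {ξ : ℝ | |ξ| ≤ R}, ENNReal.ofReal (2 * M / A ^ 2) * ENNReal.ofReal (ξ ^ 2) :=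
        lintegral_mono fun ξ => by
          rw [← ENNReal.ofReal_mul (by positivity)]
          exact enorm_mul_enorm_le_ofReal (hg ξ)
            (norm_comp_inv_mul_sub_comp_inv_mul_le hψ hA hAB ξ)
    _ = ENNReal.ofReal (4 * M / 3 * R ^ 3 / A ^ 2) := by
      rw [lintegral_const_mul' _ _ ofReal_ne_top, setLIntegral_abs_le_ofReal_sq hR,
        ← ENNReal.ofReal_mul (by positivity)]
      ring_nf

theorem lintegral_enorm_mul_dilation_sub_le {S : ℝ} (hψ : ∀ x, ‖ψ x‖ ≤ S) (μ : Measure ℝ) :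
    ∫⁻ ξ, ‖g ξ‖ₑ * ‖ψ (B⁻¹ * ξ) - ψ (A⁻¹ * ξ)‖ₑ ∂μ ≤ ENNReal.ofReal (2 * S) * ∫⁻ ξ, ‖g ξ‖ₑ ∂μ := by
  rw [← lintegral_const_mul' _ _ ofReal_ne_top]
  refine lintegral_mono fun ξ => ?_
  rw [mul_comm, ← ofReal_norm]
  gcongr
  exact (norm_sub_le (ψ (B⁻¹ * ξ)) (ψ (A⁻¹ * ξ))).trans
    (by linarith [hψ (B⁻¹ * ξ), hψ (A⁻¹ * ξ)])

theorem setLIntegral_le_abs_enorm_mul_dilation_sub_le (hg : ∀ ξ, ‖g ξ‖ ≤ 1) {k : ℕ} {D R : ℝ}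
    (hk : 2 ≤ k) (hψ : ∀ x, |x| ^ k * ‖ψ x‖ ≤ D) (hA : 0 < A) (hAB : A ≤ B) (hR : 0 < R) :
    ∫⁻ ξ in {ξ : ℝ | R ≤ |ξ|}, ‖g ξ‖ₑ * ‖ψ (B⁻¹ * ξ) - ψ (A⁻¹ * ξ)‖ₑ ≤
      ENNReal.ofReal (4 * D * B ^ k * R ^ (1 - k : ℝ) / (k - 1)) := by
  have hD : 0 ≤ D := (mul_nonneg (by positivity) (norm_nonneg _)).trans (hψ 0)
  have hB : 0 < B := hA.trans_le hAB
  have hk' : (1 : ℝ) < k := by exact_mod_cast hk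
  have hpt : ∀ ξ ∈ {ξ : ℝ | R ≤ |ξ|}, ‖g ξ‖ₑ * ‖ψ (B⁻¹ * ξ) - ψ (A⁻¹ * ξ)‖ₑ ≤
      ENNReal.ofReal (2 * D * B ^ k) * ENNReal.ofReal (|ξ| ^ (-(k : ℝ))) := fun ξ hξ => by
    have hξ₀ : ξ ≠ 0 := abs_pos.mp (hR.trans_le hξ)
    rw [← ENNReal.ofReal_mul (by positivity), Real.rpow_neg (abs_nonneg ξ), Real.rpow_natCast,
      ← div_eq_mul_inv]
    refine enorm_mul_enorm_le_ofReal (hg ξ) ((norm_sub_le _ _).trans ?_)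
    have hAB' : D * A ^ k ≤ D * B ^ k := by gcongr
    have := norm_comp_inv_mul_le hψ hB hξ₀
    have := norm_comp_inv_mul_le hψ hA hξ₀
    calc _ ≤ D * B ^ k / |ξ| ^ k + D * A ^ k / |ξ| ^ k := by gcongr
      _ ≤ 2 * D * B ^ k / |ξ| ^ k := by rw [← add_div]; gcongr; linarith
  calc _ ≤ ∫⁻ ξ in {ξ : ℝ | R ≤ |ξ|},
        ENNReal.ofReal (2 * D * B ^ k) * ENNReal.ofReal (|ξ| ^ (-(k : ℝ))) :=
        setLIntegral_mono' (measurableSet_le measurable_const measurable_abs) hpt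
    _ ≤ ENNReal.ofReal (2 * D * B ^ k) * ENNReal.ofReal (2 * R ^ (1 - k : ℝ) / (k - 1)) := by
      rw [lintegral_const_mul' _ _ ofReal_ne_top]
      gcongr
      exact setLIntegral_le_abs_ofReal_rpow_neg_le hk' hR
    _ = _ := by
      rw [← ENNReal.ofReal_mul (by positivity)]
      ring_nf

theorem lintegral_enorm_mul_dilation_sub_le_of_gap (hg : ∀ ξ, ‖g ξ‖ ≤ 1) {S M D : ℝ}
    (hS : ∀ x, ‖ψ x‖ ≤ S) (hM : ∀ x, ‖ψ x - ψ 0‖ ≤ M * x ^ 2) (hD : ∀ x, |x| ^ 5 * ‖ψ x‖ ≤ D)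
    (hA : 1 ≤ A) (hAB : A ≤ B)
    (hgap : ∫⁻ ξ in {ξ : ℝ | A ^ ((1 : ℝ) / 5) ≤ |ξ| ∧ |ξ| ≤ B ^ 2}, ‖g ξ‖ₑ ≤
      ENNReal.ofReal (A ^ (-3 : ℝ))) :
    ∫⁻ ξ, ‖g ξ‖ₑ * ‖ψ (B⁻¹ * ξ) - ψ (A⁻¹ * ξ)‖ₑ ≤
      ENNReal.ofReal ((4 * M / 3 + 2 * S + D) * A ^ (-(7 : ℝ) / 5)) := by
  have hA₀ : 0 < A := by linarith
  have hB₀ : 0 < B := by linarith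
  have hS₀ : 0 ≤ S := (norm_nonneg _).trans (hS 0)
  have hM₀ : 0 ≤ M := by simpa using (norm_nonneg _).trans (hM 1)
  have hD₀ : 0 ≤ D := (mul_nonneg (by positivity) (norm_nonneg _)).trans (hD 0)
  have hA₃ : (A ^ 3)⁻¹ ≤ A ^ (-(7 : ℝ) / 5) := by
    simpa [Real.rpow_neg hA₀.le] using
      Real.rpow_le_rpow_of_exponent_le hA (by norm_num : -((3 : ℕ) : ℝ) ≤ -7 / 5)
  set R := A ^ ((1 : ℝ) / 5)
  set f := fun ξ => ‖g ξ‖ₑ * ‖ψ (B⁻¹ * ξ) - ψ (A⁻¹ * ξ)‖ₑ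
  have hlow : ∫⁻ ξ in {ξ : ℝ | |ξ| ≤ R}, f ξ ≤ ENNReal.ofReal (4 * M / 3 * A ^ (-(7 : ℝ) / 5)) := by
    refine (setLIntegral_abs_le_enorm_mul_dilation_sub_le hg hM hA₀ hAB (by positivity)).trans_eq ?_
    rw [← Real.rpow_natCast _ 3, ← Real.rpow_mul hA₀.le, ← Real.rpow_natCast A 2, mul_div_assoc,
      ← Real.rpow_sub hA₀]
    norm_num
  have hmid : ∫⁻ ξ in {ξ : ℝ | R ≤ |ξ| ∧ |ξ| ≤ B ^ 2}, f ξ ≤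
      ENNReal.ofReal (2 * S * A ^ (-(7 : ℝ) / 5)) := by
    refine (lintegral_enorm_mul_dilation_sub_le hS _).trans ?_
    rw [ENNReal.ofReal_mul (q := A ^ (-(7 : ℝ) / 5)) (by positivity)]
    refine mul_le_mul_right (hgap.trans (ofReal_le_ofReal ?_)) _
    simpa [Real.rpow_neg hA₀.le] using hA₃
  have hhigh : ∫⁻ ξ in {ξ : ℝ | B ^ 2 ≤ |ξ|}, f ξ ≤ ENNReal.ofReal (D * A ^ (-(7 : ℝ) / 5)) := by
    refine (setLIntegral_le_abs_enorm_mul_dilation_sub_le hg (k := 5) (by norm_num) hD hA₀ hAB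
      (by positivity)).trans (ofReal_le_ofReal ?_)
    rw [show 1 - ((5 : ℕ) : ℝ) = -(4 : ℕ) by norm_num, Real.rpow_neg (by positivity),
      Real.rpow_natCast]
    calc _ = D * (B ^ 3)⁻¹ := by field_simp; ring
      _ ≤ D * (A ^ 3)⁻¹ := by gcongr
      _ ≤ _ := by gcongr
  calc ∫⁻ ξ, f ξ ≤ _ := lintegral_le_setLIntegral_abs_le_add f R (B ^ 2)
    _ ≤ _ := add_le_add hlow (add_le_add hmid hhigh)
    _ = _ := by
      rw [← ENNReal.ofReal_add (by positivity) (by positivity),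
        ← ENNReal.ofReal_add (by positivity) (by positivity)]
      ring_nf

end Dilation

theorem stmt13_general (φ : SchwartzMap ℝ ℝ)
    (hderiv : deriv (FourierTransform.fourier (fun x => (φ x : ℂ))) 0 = 0) :
    ∃ C : ℝ, 0 < C ∧ ∃ A₀ : ℝ, ∀ (μ : Measure ℝ), IsProbabilityMeasure μ →
      ∀ A B : ℝ, A₀ ≤ A → 1 ≤ A → A ≤ B →
      (∫⁻ ξ in {ξ : ℝ | A ^ ((1 : ℝ) / 5) ≤ |ξ| ∧ |ξ| ≤ B ^ 2},
          (‖measureFT μ ξ‖₊ : ℝ≥0∞)) ≤ ENNReal.ofReal (A ^ (-3 : ℝ)) →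
      ∫⁻ ξ : ℝ, (‖measureFT μ ξ‖₊ : ℝ≥0∞) *
          (‖FourierTransform.fourier (fun x => (φ x : ℂ)) (B⁻¹ * ξ) -
            FourierTransform.fourier (fun x => (φ x : ℂ)) (A⁻¹ * ξ)‖₊ : ℝ≥0∞) ≤
        ENNReal.ofReal (C * A ^ (-(7 : ℝ) / 5)) := by
  -- `⇑ψ` is `𝓕 (fun x => (φ x : ℂ))` by definition, so `hderiv` speaks about `ψ`.
  let ψ : 𝓢(ℝ, ℂ) := 𝓕 (φ.postcompCLM Complex.ofRealCLM)
  set S := SchwartzMap.seminorm ℝ 0 0 ψ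
  set M := SchwartzMap.seminorm ℝ 0 2 ψ
  set D := SchwartzMap.seminorm ℝ 5 0 ψ
  have hM : ∀ x, ‖ψ x - ψ 0‖ ≤ M * x ^ 2 := fun x => by
    simpa using norm_sub_le_mul_sq_of_deriv_eq_zero (ψ.smooth 2) hderiv
      (fun y => by simpa using ψ.le_seminorm' ℝ 0 2 y) x
  refine ⟨4 * M / 3 + 2 * S + D + 1, by positivity, 0, fun μ _ A B _ hA hAB hgap => ?_⟩
  calc _ ≤ ENNReal.ofReal ((4 * M / 3 + 2 * S + D) * A ^ (-(7 : ℝ) / 5)) :=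
        lintegral_enorm_mul_dilation_sub_le_of_gap (norm_measureFT_le_one μ) (ψ.norm_le_seminorm ℝ)
          hM (by simpa using ψ.norm_pow_mul_le_seminorm ℝ 5) hA hAB hgap
    _ ≤ _ := ofReal_le_ofReal (by gcongr ?_ * _; linarith)

theorem stmt13 (φ : SchwartzMap ℝ ℝ) (hint : ∫ x, φ x = 1)
    (hderiv : deriv (FourierTransform.fourier (fun x => (φ x : ℂ))) 0 = 0) :
    ∃ C : ℝ, 0 < C ∧ ∃ A₀ : ℝ, ∀ (μ : Measure ℝ), IsProbabilityMeasure μ →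
      ∀ A B : ℝ, A₀ ≤ A → 1 ≤ A → A ≤ B →
      (∫⁻ ξ in {ξ : ℝ | A ^ ((1 : ℝ) / 5) ≤ |ξ| ∧ |ξ| ≤ B ^ 2},
          (‖measureFT μ ξ‖₊ : ℝ≥0∞)) ≤ ENNReal.ofReal (A ^ (-3 : ℝ)) →
      ∫⁻ ξ : ℝ, (‖measureFT μ ξ‖₊ : ℝ≥0∞) *
          (‖FourierTransform.fourier (fun x => (φ x : ℂ)) (B⁻¹ * ξ) -
            FourierTransform.fourier (fun x => (φ x : ℂ)) (A⁻¹ * ξ)‖₊ : ℝ≥0∞) ≤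
        ENNReal.ofReal (C * A ^ (-(7 : ℝ) / 5)) :=
  stmt13_general φ hderiv
end
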